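/- For i ≥ 2 and 1 ≤ k ≤ i, the polynomial S_{i,k}(t) = Σ_{compositions (i_1,…,i_k) of i} p_{i_1,…,i_k}(t) satisfies S_{i,k}(i−2) = −|s(i−1, i−k)| and S_{i,k}(0) = (1−i) · s(i−1, i−k), where s(·,·) are Stirling numbers of the first kind. -/

import Mathlib

/-
A composition of `i` into `k` parts is determined by its `k - 1` interior partial sums, a
`(k - 1)`-subset of `{1, …, i - 1}`, while its last partial sum is always `i`. Hence
`S_{i,k}(t) = (t - i + 1) · e_{k-1}(t, t - 1, …, t - i + 2)`. Vieta's formulas for the falling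
factorial `x (x - 1) ⋯ (x - i + 2) = Σ s(i - 1, m) x^m` give `e_{k-1}(0, -1, …, -(i - 2)) =
s(i - 1, i - k)`; at `t = i - 2` the arguments are `i - 2, …, 0`, whose elementary symmetric
function is the unsigned Stirling number.
-/

open Finset

/-- `p_{i_1,…,i_k}(t) = (t−i_1+1)(t−i_1−i_2+1)⋯(t−i+1)`. -/
noncomputable def pProd (l : List ℕ) (t : ℂ) : ℂ :=
  ∏ j ∈ Finset.range l.length, (t - ((l.take (j + 1)).sum : ℂ) + 1)

/-- `S_{i,k}(t)`: sum of `p_{i_1,…,i_k}(t)` over compositions of `i` of length `k`. -/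
noncomputable def Spoly (i k : ℕ) (t : ℂ) : ℂ :=
  ∑ c ∈ Finset.univ.filter (fun c : Composition i => c.length = k), pProd c.blocks t

/-- Signed Stirling numbers of the first kind. -/
def stirling1 : ℕ → ℕ → ℤ
  | 0, 0 => 1
  | 0, _ + 1 => 0
  | n + 1, 0 => -(n : ℤ) * stirling1 n 0
  | n + 1, m + 1 => stirling1 n m - (n : ℤ) * stirling1 n (m + 1)

section Stirling

open Polynomial

theorem coeff_descPochhammer_int (n m : ℕ) : (descPochhammer ℤ n).coeff m = stirling1 n m := by
  induction n generalizing m with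
  | zero => cases m <;> simp [stirling1, coeff_one]
  | succ n ih =>
    rw [descPochhammer_succ_right, ← C_eq_natCast]
    cases m with
    | zero => simp [mul_coeff_zero, ih, stirling1, mul_comm]
    | succ m => rw [coeff_mul_X_sub_C, ih, ih, stirling1]; ring

theorem descPochhammer_eq_prod_X_add_C (R : Type*) [CommRing R] (n : ℕ) :
    descPochhammer R n = ∏ a : Fin n, (X + C (-(a : R))) := by
  induction n with
  | zero => simp
  | succ n ih =>
    rw [descPochhammer_succ_right, ih, Fin.prod_univ_castSucc]
    simp [sub_eq_add_neg]

theorem stirling1_sub_eq_sum_prod {m j : ℕ} (hj : j ≤ m) :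
    stirling1 m (m - j) =
      ∑ A ∈ (univ : Finset (Fin m)).powersetCard j, ∏ a ∈ A, -(a : ℤ) := by
  rw [← coeff_descPochhammer_int, descPochhammer_eq_prod_X_add_C,
    prod_X_add_C_coeff _ _ (by simp), card_univ, Fintype.card_fin, Nat.sub_sub_self hj]

theorem stirling1_sub_eq_neg_one_pow_mul {m j : ℕ} (hj : j ≤ m) :
    stirling1 m (m - j) =
      (-1) ^ j *
        ((∑ A ∈ (univ : Finset (Fin m)).powersetCard j, ∏ a ∈ A, (a : ℕ) : ℕ) : ℤ) := by
  rw [stirling1_sub_eq_sum_prod hj, Nat.cast_sum, mul_sum]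
  refine sum_congr rfl fun A hA => ?_
  rw [prod_neg, (mem_powersetCard.1 hA).2]
  push_cast
  rfl

theorem natAbs_stirling1_sub {m j : ℕ} (hj : j ≤ m) :
    (stirling1 m (m - j)).natAbs =
      ∑ A ∈ (univ : Finset (Fin m)).powersetCard j, ∏ a ∈ A, (a : ℕ) := by
  rw [stirling1_sub_eq_neg_one_pow_mul hj, Int.natAbs_mul, Int.natAbs_pow, Int.natAbs_neg,
    Int.natAbs_one, one_pow, one_mul, Int.natAbs_natCast]

end Stirling

theorem sum_powersetCard_prod_zero_sub {R : Type*} [CommRing R] {m j : ℕ} (hj : j ≤ m) :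
    ∑ A ∈ (univ : Finset (Fin m)).powersetCard j, ∏ a ∈ A, ((0 : R) - a) =
      stirling1 m (m - j) := by
  rw [stirling1_sub_eq_sum_prod hj]
  push_cast
  simp only [zero_sub]

theorem sum_powersetCard_prod_rev {R : Type*} [CommSemiring R] (m j : ℕ) (f : Fin m → R) :
    ∑ A ∈ (univ : Finset (Fin m)).powersetCard j, ∏ a ∈ A, f a.rev =
      ∑ A ∈ (univ : Finset (Fin m)).powersetCard j, ∏ a ∈ A, f a := by
  refine sum_equiv (Fin.revPerm.finsetCongr) (fun A => ?_) (fun A _ => ?_)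
  · simp
  · simp [prod_map]

theorem sum_powersetCard_prod_last_sub {R : Type*} [CommRing R] {m j : ℕ} (hj : j ≤ m) :
    ∑ A ∈ (univ : Finset (Fin m)).powersetCard j, ∏ a ∈ A, ((m : R) - 1 - a) =
      (stirling1 m (m - j)).natAbs := by
  have hrev (a : Fin m) : (m : R) - 1 - a = (a.rev : R) := by
    rw [Fin.val_rev, Nat.cast_sub (by omega)]
    push_cast
    ring
  simp_rw [hrev, sum_powersetCard_prod_rev m j (fun a => (a : R)), natAbs_stirling1_sub hj]
  push_cast
  rfl

theorem Composition.boundaries_erase_zero {n : ℕ} (c : Composition n) :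
    c.boundaries.erase 0 = univ.map ((Fin.succEmb c.length).trans c.boundary.toEmbedding) := by
  rw [Composition.boundaries, ← c.boundary_zero, ← RelEmbedding.coe_toEmbedding, ← map_erase,
    ← map_map, Fin.univ_succ, cons_eq_insert, erase_insert (by simp)]
  rfl

def compositionFinsetEquiv (n : ℕ) : Composition n ≃ Finset (Fin (n - 1)) :=
  (compositionEquiv n).trans (compositionAsSetEquiv n)

theorem mem_compositionFinsetEquiv {n : ℕ} (c : Composition n) (i : Fin (n - 1)) :
    i ∈ compositionFinsetEquiv n c ↔
      Fin.succ (Fin.castLE (Nat.sub_le n 1) i) ∈ c.boundaries := by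
  simp only [compositionFinsetEquiv, Equiv.trans_apply, compositionEquiv, compositionAsSetEquiv,
    Equiv.coe_fn_mk, Set.mem_toFinset]
  exact Iff.of_eq (congrArg (· ∈ c.boundaries) (Fin.ext (add_comm _ _)))

theorem map_compositionFinsetEquiv {n : ℕ} (c : Composition n) :
    (compositionFinsetEquiv n c).map ((Fin.castLEEmb (Nat.sub_le n 1)).trans (Fin.succEmb n)) =
      (c.boundaries.erase 0).erase (Fin.last n) := by
  ext b
  simp only [mem_map, mem_compositionFinsetEquiv, mem_erase]
  constructor
  · rintro ⟨a, ha, rfl⟩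
    exact ⟨by simp [Fin.ext_iff]; omega, by simp [Fin.ext_iff], ha⟩
  · rintro ⟨hlast, hzero, hb⟩
    obtain ⟨b, hb'⟩ := b
    simp only [ne_eq, Fin.ext_iff, Fin.val_last, Fin.val_zero] at hlast hzero
    exact ⟨⟨b - 1, by omega⟩, by convert hb; simp; omega, by simp [Fin.ext_iff]; omega⟩

theorem Composition.last_mem_boundaries_erase_zero {n : ℕ} (c : Composition n) (hn : n ≠ 0) :
    Fin.last n ∈ c.boundaries.erase 0 :=
  mem_erase.2 ⟨by simp [Fin.ext_iff, hn], c.toCompositionAsSet.getLast_mem⟩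

theorem card_compositionFinsetEquiv {n : ℕ} (c : Composition n) (hn : n ≠ 0) :
    #(compositionFinsetEquiv n c) = c.length - 1 := by
  rw [← card_map, map_compositionFinsetEquiv,
    card_erase_of_mem (c.last_mem_boundaries_erase_zero hn), c.boundaries_erase_zero, card_map,
    card_univ, Fintype.card_fin]

theorem pProd_blocks_eq_prod_boundaries {n : ℕ} (c : Composition n) (t : ℂ) :
    pProd c.blocks t = ∏ b ∈ c.boundaries.erase 0, (t - (b : ℕ) + 1) := by
  rw [c.boundaries_erase_zero, prod_map, pProd, c.blocks_length,
    ← Fin.prod_univ_eq_prod_range (fun j => t - ((c.blocks.take (j + 1)).sum : ℂ) + 1)]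
  rfl

theorem pProd_blocks_eq {n : ℕ} (c : Composition n) (hn : n ≠ 0) (t : ℂ) :
    pProd c.blocks t = (t - n + 1) * ∏ a ∈ compositionFinsetEquiv n c, (t - (a : ℕ)) := by
  rw [pProd_blocks_eq_prod_boundaries, ← mul_prod_erase _ _ (c.last_mem_boundaries_erase_zero hn),
    ← map_compositionFinsetEquiv, prod_map, Fin.val_last]
  congr 1
  refine prod_congr rfl fun a _ => ?_
  simp only [Function.Embedding.trans_apply, Fin.castLEEmb_apply, Fin.coe_succEmb, Fin.val_succ,
    Fin.val_castLE]
  push_cast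
  ring

theorem Spoly_succ_succ (n k : ℕ) (t : ℂ) :
    Spoly (n + 1) (k + 1) t =
      (t - n) * ∑ A ∈ (univ : Finset (Fin n)).powersetCard k, ∏ a ∈ A, (t - (a : ℕ)) := by
  have hsub : t - n = t - ((n + 1 : ℕ) : ℂ) + 1 := by push_cast; ring
  rw [Spoly, hsub, mul_sum]
  refine sum_equiv (compositionFinsetEquiv (n + 1)) (fun c => ?_)
    (fun c _ => pProd_blocks_eq c n.succ_ne_zero t)
  have := c.length_pos_of_pos n.succ_pos
  simp only [mem_filter, mem_univ, true_and, mem_powersetCard, subset_univ,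
    card_compositionFinsetEquiv c n.succ_ne_zero]
  omega

theorem stmt19_general (i k : ℕ) (hk1 : 1 ≤ k) (hki : k ≤ i) :
    Spoly i k ((i : ℂ) - 2) = -((stirling1 (i - 1) (i - k)).natAbs : ℂ) ∧
    Spoly i k 0 = (1 - (i : ℂ)) * (stirling1 (i - 1) (i - k) : ℂ) := by
  obtain ⟨m, rfl⟩ : ∃ m, i = m + 1 := ⟨i - 1, by omega⟩
  obtain ⟨j, rfl⟩ : ∃ j, k = j + 1 := ⟨k - 1, by omega⟩
  have hjm : j ≤ m := by omega
  have hshift : ((m + 1 : ℕ) : ℂ) - 2 = (m : ℂ) - 1 := by push_cast; ring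
  rw [hshift, Spoly_succ_succ, Spoly_succ_succ, sum_powersetCard_prod_last_sub hjm,
    sum_powersetCard_prod_zero_sub hjm, Nat.add_sub_cancel, Nat.add_sub_add_right]
  push_cast
  constructor <;> ring

theorem stmt19 (i k : ℕ) (hi : 2 ≤ i) (hk1 : 1 ≤ k) (hki : k ≤ i) :
    Spoly i k ((i : ℂ) - 2) = -((stirling1 (i - 1) (i - k)).natAbs : ℂ) ∧
    Spoly i k 0 = (1 - (i : ℂ)) * (stirling1 (i - 1) (i - k) : ℂ) :=
  stmt19_general i k hk1 hki
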